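/- The (n,n)-function f with fᵢ(x) = ∏_{j ≠ i} xⱼ can be computed by an XOR-AND circuit with at most 3n − 6 AND gates, for n ≥ 4. -/

import Mathlib

/-- An instruction of an XOR-AND straight-line circuit: an input variable,
the constant 1, an XOR of two previous wires, or an AND of two previous wires.
(Unbounded-fanin XOR is simulated, for free, by binary XORs.) -/
inductive Instr where
  | var : ℕ → Instr
  | one : Instr
  | xor : ℕ → ℕ → Instr
  | and : ℕ → ℕ → Instr

def Instr.isAnd : Instr → Bool
  | .and _ _ => true
  | _ => false

/-- Value of one instruction, given input `x` and previously computed wire values. -/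
def stepEval (n : ℕ) (x : Fin n → ZMod 2) (vals : List (ZMod 2)) : Instr → ZMod 2
  | .var i => if h : i < n then x ⟨i, h⟩ else 0
  | .one => 1
  | .xor a b => vals.getD a 0 + vals.getD b 0
  | .and a b => vals.getD a 0 * vals.getD b 0

/-- The list of all wire values of the circuit `P` on input `x`. -/
def evalProg (n : ℕ) (x : Fin n → ZMod 2) (P : List Instr) : List (ZMod 2) :=
  P.foldl (fun vals ins => vals ++ [stepEval n x vals ins]) []

/-- Number of AND gates in the circuit. -/
def andCount (P : List Instr) : ℕ := (P.filter Instr.isAnd).length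

/-- The circuit `P` with output wires `out` computes the `(n,m)`-function `f`. -/
def Computes (n m : ℕ) (P : List Instr) (out : Fin m → ℕ)
    (f : (Fin n → ZMod 2) → Fin m → ZMod 2) : Prop :=
  ∀ x i, (evalProg n x P).getD (out i) 0 = f x i

/-- The circuit `P` with output wire `out` computes the `(n,1)`-function `f`. -/
def Computes1 (n : ℕ) (P : List Instr) (out : ℕ)
    (f : (Fin n → ZMod 2) → ZMod 2) : Prop :=
  ∀ x, (evalProg n x P).getD out 0 = f x

/-!
Write `fᵢ = (x₀ ⋯ xᵢ₋₁) · (xᵢ₊₁ ⋯ xₙ₋₁)`. Computing the prefix products `x₀ ⋯ xₖ` and the suffix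
products `xₖ ⋯ xₙ₋₁` for `1 ≤ k ≤ n - 2` takes `n - 2` AND gates each; then `f₀` and `fₙ₋₁` are
already a suffix and a prefix product, and each of the remaining `n - 2` outputs costs one more
AND gate.
-/

open Finset

theorem getD_append_map_range {α : Type*} (L : List α) (v : ℕ → α) {i j k : ℕ} (hj : j < k)
    (hi : i = L.length + j) (d : α) : (L ++ (List.range k).map v).getD i d = v j := by
  subst hi
  rw [List.getD_append_right _ _ _ _ (by omega), Nat.add_sub_cancel_left,
    List.getD_eq_getElem _ _ (by simpa), List.getElem_map, List.getElem_range]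

theorem getD_ofFn_append {α : Type*} {n : ℕ} (x : Fin n → α) (R : List α) {i : ℕ} (hi : i < n)
    (d : α) : (List.ofFn x ++ R).getD i d = x ⟨i, hi⟩ := by
  rw [List.getD_append _ _ _ _ (by simpa), List.getD_eq_getElem _ _ (by simpa), List.getElem_ofFn]

section PrefixSuffix

variable {M : Type*} [CommMonoid M] {n : ℕ}

def prefixProd (x : Fin n → M) (k : ℕ) : M := ∏ i with i.val < k, x i

def suffixProd (x : Fin n → M) (k : ℕ) : M := ∏ i with k ≤ i.val, x i

theorem prefixProd_zero (x : Fin n → M) : prefixProd x 0 = 1 := by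
  simp [prefixProd]

theorem prefixProd_succ (x : Fin n → M) {k : ℕ} (hk : k < n) :
    prefixProd x (k + 1) = prefixProd x k * x ⟨k, hk⟩ := by
  have : univ.filter (fun i : Fin n => i.val < k + 1)
      = insert ⟨k, hk⟩ (univ.filter fun i : Fin n => i.val < k) := by
    ext i; simp [Fin.ext_iff]; omega
  rw [prefixProd, this, prod_insert (by simp), mul_comm, prefixProd]

theorem suffixProd_of_le (x : Fin n → M) {k : ℕ} (hk : n ≤ k) : suffixProd x k = 1 :=
  prod_eq_one fun i hi => absurd (mem_filter.1 hi).2 (by omega)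

theorem suffixProd_eq_mul_succ (x : Fin n → M) {k : ℕ} (hk : k < n) :
    suffixProd x k = x ⟨k, hk⟩ * suffixProd x (k + 1) := by
  have : univ.filter (fun i : Fin n => k ≤ i.val)
      = insert ⟨k, hk⟩ (univ.filter fun i : Fin n => k + 1 ≤ i.val) := by
    ext i; simp [Fin.ext_iff]; omega
  rw [suffixProd, this, prod_insert (by simp), suffixProd]

theorem prod_erase_eq_prefixProd_mul_suffixProd (x : Fin n → M) (i : Fin n) :
    ∏ j ∈ univ.erase i, x j = prefixProd x i * suffixProd x (i + 1) := by
  have : univ.erase i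
      = univ.filter (fun j : Fin n => j.val < i.val) ∪ univ.filter (fun j => i.val + 1 ≤ j.val) := by
    ext j; simp [Fin.ext_iff]
  rw [this, prod_union (disjoint_filter.2 fun j _ h => by omega), prefixProd, suffixProd]

end PrefixSuffix

section Evaluation

variable {n : ℕ} (x : Fin n → ZMod 2)

theorem evalProg_append_singleton (P : List Instr) (g : Instr) :
    evalProg n x (P ++ [g]) = evalProg n x P ++ [stepEval n x (evalProg n x P) g] := by
  simp only [evalProg, List.foldl_append, List.foldl_cons, List.foldl_nil]

theorem evalProg_append_map_range (P : List Instr) (g : ℕ → Instr) (v : ℕ → ZMod 2) (k : ℕ)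
    (h : ∀ j < k, stepEval n x (evalProg n x P ++ (List.range j).map v) (g j) = v j) :
    evalProg n x (P ++ (List.range k).map g) = evalProg n x P ++ (List.range k).map v := by
  induction k with
  | zero => simp
  | succ k ih =>
    rw [List.range_succ, List.map_append, List.map_append, List.map_singleton,
      List.map_singleton, ← List.append_assoc, evalProg_append_singleton,
      ih fun j hj => h j (by omega), h k (by omega), List.append_assoc]

theorem evalProg_inputs : evalProg n x ((List.range n).map .var) = List.ofFn x := by
  rw [← List.nil_append ((List.range n).map _),
    evalProg_append_map_range x [] _ (fun j => if h : j < n then x ⟨j, h⟩ else 0) n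
      fun j _ => rfl]
  apply List.ext_getElem <;> simp +contextual [evalProg]

end Evaluation

theorem andCount_append (P Q : List Instr) : andCount (P ++ Q) = andCount P + andCount Q := by
  simp only [andCount, List.filter_append, List.length_append]

theorem andCount_le_length (P : List Instr) : andCount P ≤ P.length :=
  List.length_filter_le _ _

theorem andCount_map_var (k : ℕ) : andCount ((List.range k).map .var) = 0 := by
  simp [andCount, Instr.isAnd]

theorem andCount_map_range_succ_le (g : ℕ → Instr) (hg : (g 0).isAnd = false) (k : ℕ) :
    andCount ((List.range (k + 1)).map g) ≤ k := by
  rw [List.range_succ_eq_map, List.map_cons, andCount, List.filter_cons_of_neg (by simp [hg])]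
  exact (List.length_filter_le _ _).trans (by simp)

/- Wire layout of the circuit on `m + 2` inputs: the inputs `x i` at `i`, `prefixProd x (j + 1)`
at `m + 2 + j` and `suffixProd x (m + 1 - j)` at `2 * m + 3 + j` for `j ≤ m`, and
`prefixProd x (j + 1) * suffixProd x (j + 2)` at `3 * m + 4 + j` for `j < m`. The first gate of
each product block is a free copy of an input, which keeps the blocks uniform. -/

def prefixGate (m : ℕ) : ℕ → Instr
  | 0 => .var 0
  | j + 1 => .and (m + 2 + j) (j + 1)

def suffixGate (m : ℕ) : ℕ → Instr
  | 0 => .var (m + 1)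
  | j + 1 => .and (2 * m + 3 + j) (m - j)

def outputGate (m j : ℕ) : Instr := .and (m + 2 + j) (3 * m + 2 - j)

def allButOneCircuit (m : ℕ) : List Instr :=
  (List.range (m + 2)).map .var ++ (List.range (m + 1)).map (prefixGate m) ++
    (List.range (m + 1)).map (suffixGate m) ++ (List.range m).map (outputGate m)

def allButOneOutput (m : ℕ) (i : Fin (m + 2)) : ℕ :=
  if i.val = 0 then 3 * m + 3 else if i.val = m + 1 then 2 * m + 2 else 3 * m + 3 + i

theorem andCount_allButOneCircuit (m : ℕ) : andCount (allButOneCircuit m) ≤ 3 * m := by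
  have hpre := andCount_map_range_succ_le (prefixGate m) rfl m
  have hsuf := andCount_map_range_succ_le (suffixGate m) rfl m
  have hout : andCount ((List.range m).map (outputGate m)) ≤ m := by
    simpa using andCount_le_length ((List.range m).map (outputGate m))
  simp only [allButOneCircuit, andCount_append, andCount_map_var]
  omega

section Wires

variable {m : ℕ} (x : Fin (m + 2) → ZMod 2)

def prefixWires : List (ZMod 2) := (List.range (m + 1)).map fun j => prefixProd x (j + 1)

def suffixWires : List (ZMod 2) := (List.range (m + 1)).map fun j => suffixProd x (m + 1 - j)

def outputWires : List (ZMod 2) :=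
  (List.range m).map fun j => prefixProd x (j + 1) * suffixProd x (j + 2)

@[simp] theorem length_prefixWires : (prefixWires x).length = m + 1 := by simp [prefixWires]

@[simp] theorem length_suffixWires : (suffixWires x).length = m + 1 := by simp [suffixWires]

theorem stepEval_prefixGate (j : ℕ) (hj : j < m + 1) :
    stepEval (m + 2) x (List.ofFn x ++ (List.range j).map fun j => prefixProd x (j + 1))
      (prefixGate m j) = prefixProd x (j + 1) := by
  cases j with
  | zero => simp [stepEval, prefixGate, prefixProd_succ, prefixProd_zero]
  | succ j =>
    rw [prefixGate, stepEval, getD_append_map_range _ _ (Nat.lt_succ_self j) (by simp),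
      getD_ofFn_append _ _ (by omega), prefixProd_succ x (k := j + 1) (by omega)]

theorem stepEval_suffixGate (j : ℕ) (hj : j < m + 1) :
    stepEval (m + 2) x (List.ofFn x ++ prefixWires x ++
      (List.range j).map fun j => suffixProd x (m + 1 - j)) (suffixGate m j)
      = suffixProd x (m + 1 - j) := by
  cases j with
  | zero =>
    simp [stepEval, suffixGate, suffixProd_eq_mul_succ x (Nat.lt_succ_self (m + 1)),
      suffixProd_of_le x le_rfl]
  | succ j =>
    rw [suffixGate, stepEval, getD_append_map_range _ _ (Nat.lt_succ_self j)
      (by simp; omega), List.append_assoc, getD_ofFn_append _ _ (by omega),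
      show m + 1 - (j + 1) = m - j by omega, suffixProd_eq_mul_succ x (by omega : m - j < m + 2),
      show m - j + 1 = m + 1 - j by omega, mul_comm]

theorem stepEval_outputGate (j : ℕ) (hj : j < m) :
    stepEval (m + 2) x (List.ofFn x ++ prefixWires x ++ suffixWires x ++
      (List.range j).map fun j => prefixProd x (j + 1) * suffixProd x (j + 2)) (outputGate m j)
      = prefixProd x (j + 1) * suffixProd x (j + 2) := by
  rw [outputGate, stepEval, List.getD_append _ _ _ _ (by simp; omega),
    List.getD_append _ _ _ _ (by simp; omega), prefixWires,
    getD_append_map_range _ _ (by omega : j < m + 1) (by simp),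
    List.getD_append _ _ _ _ (by simp; omega), suffixWires,
    getD_append_map_range _ _ (by omega : m - 1 - j < m + 1) (by simp; omega),
    show m + 1 - (m - 1 - j) = j + 2 by omega]

theorem evalProg_allButOneCircuit :
    evalProg (m + 2) x (allButOneCircuit m)
      = List.ofFn x ++ prefixWires x ++ suffixWires x ++ outputWires x := by
  have hpre := evalProg_append_map_range x _ (prefixGate m) _ (m + 1) fun j hj => by
    rw [evalProg_inputs]; exact stepEval_prefixGate x j hj
  rw [evalProg_inputs] at hpre
  have hsuf := evalProg_append_map_range x _ (suffixGate m) _ (m + 1) fun j hj => by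
    rw [hpre]; exact stepEval_suffixGate x j hj
  rw [hpre] at hsuf
  rw [allButOneCircuit, evalProg_append_map_range x _ (outputGate m) _ m fun j hj => by
    rw [hsuf]; exact stepEval_outputGate x j hj, hsuf]
  rfl

theorem getD_allButOneOutput (i : Fin (m + 2)) :
    (List.ofFn x ++ prefixWires x ++ suffixWires x ++ outputWires x).getD (allButOneOutput m i) 0
      = prefixProd x i * suffixProd x (i + 1) := by
  have hi := i.isLt
  unfold allButOneOutput
  split_ifs with h0 hlast
  · rw [List.getD_append _ _ _ _ (by simp; omega), suffixWires,
      getD_append_map_range _ _ (Nat.lt_succ_self m) (by simp; omega), h0, prefixProd_zero,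
      one_mul, Nat.add_sub_cancel_left, zero_add]
  · rw [List.getD_append _ _ _ _ (by simp; omega), List.getD_append _ _ _ _ (by simp; omega),
      prefixWires, getD_append_map_range _ _ (Nat.lt_succ_self m) (by simp; omega), hlast,
      suffixProd_of_le x le_rfl, mul_one]
  · rw [outputWires, getD_append_map_range _ _ (by omega : i.val - 1 < m) (by simp; omega),
      show i.val - 1 + 1 = i by omega, show i.val - 1 + 2 = i + 1 by omega]

end Wires

/-- The (n,n)-function f_i(x) = prod_(j ≠ i) x_j is computable with at most
3n - 6 AND gates, for n ≥ 4. -/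
theorem explicit_upper_bound (n : ℕ) (hn : 4 ≤ n) :
    ∃ (P : List Instr) (out : Fin n → ℕ),
      Computes n n P out (fun x i => ∏ j ∈ Finset.univ.erase i, x j) ∧
        andCount P ≤ 3 * n - 6 := by
  obtain ⟨m, rfl⟩ : ∃ m, n = m + 2 := ⟨n - 2, by omega⟩
  refine ⟨allButOneCircuit m, allButOneOutput m, fun x i => ?_, ?_⟩
  · rw [evalProg_allButOneCircuit, getD_allButOneOutput]
    exact (prod_erase_eq_prefixProd_mul_suffixProd x i).symm
  · have := andCount_allButOneCircuit m
    omega
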